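/- arXiv:1209.1271 — 7 statements merged into one kernel-verified Lean document; each statement's English description precedes it below -/
import Mathlib

section
/- Let g be analytic near 0 with g(0)=0, g'(0)=1, and let G(x)=∫₀ˣ g(t)dt. Then the function x ↦ d/dx [G(x)/g(x)²] extends continuously to x=0 with limit -g''(0)/3. -/
/-!
Away from the zeros of `g`, `(G / g²)' = N / g³` with `N = g² - 2 G g'`. The numerator is
flat to second order at `0`: `N' = -2 G g''`, and `G(x) ~ x² / 2` because `g(x) ~ x`. Hence
l'Hôpital against `x³` gives `N(x) / x³ → -g''(0) / 3`, and `g(x) / x → 1` turns this into the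
limit of `N / g³`.
-/

open Filter Set

open scoped Topology

theorem eventually_hasDerivAt_integral {f : ℝ → ℝ} {a : ℝ}
    (hf : ∀ᶠ x in 𝓝 a, ContinuousAt f x) :
    ∀ᶠ x in 𝓝 a, HasDerivAt (fun u => ∫ t in a..u, f t) (f x) x := by
  obtain ⟨ε, hε, hball⟩ := Metric.eventually_nhds_iff_ball.1 hf
  have hcont : ContinuousOn f (Metric.ball a ε) := fun x hx => (hball x hx).continuousWithinAt
  filter_upwards [Metric.ball_mem_nhds a hε] with x hx
  have hsub : uIcc a x ⊆ Metric.ball a ε :=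
    segment_eq_uIcc a x ▸ (convex_ball a ε).segment_subset (Metric.mem_ball_self hε) hx
  exact intervalIntegral.integral_hasDerivAt_right ((hcont.mono hsub).intervalIntegrable)
    (hcont.stronglyMeasurableAtFilter Metric.isOpen_ball x hx) (hball x hx)

theorem tendsto_div_pow_nhdsNE_of_hasDerivAt {f f' : ℝ → ℝ} {n : ℕ} {l : Filter ℝ}
    (hff' : ∀ᶠ x in 𝓝[≠] 0, HasDerivAt f (f' x) x) (hf : Tendsto f (𝓝[≠] 0) (𝓝 0))
    (hdiv : Tendsto (fun x => f' x / ((n + 1) * x ^ n)) (𝓝[≠] 0) l) :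
    Tendsto (fun x => f x / x ^ (n + 1)) (𝓝[≠] 0) l := by
  refine HasDerivAt.lhopital_zero_nhdsNE hff' (Eventually.of_forall fun x => ?_) ?_ hf ?_ hdiv
  · simpa using hasDerivAt_pow (n + 1) x
  · filter_upwards [self_mem_nhdsWithin] with x hx
    exact mul_ne_zero (by positivity) (pow_ne_zero n hx)
  · refine tendsto_nhdsWithin_of_tendsto_nhds ?_
    simpa using (continuous_pow (n + 1)).tendsto (0 : ℝ)

section

variable {g g' g'' G : ℝ → ℝ}

theorem tendsto_primitive_div_sq {L : ℝ} (hG : ∀ᶠ x in 𝓝 0, HasDerivAt G (g x) x)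
    (hG0 : G 0 = 0) (hg : Tendsto (fun x => g x / x) (𝓝[≠] 0) (𝓝 L)) :
    Tendsto (fun x => G x / x ^ 2) (𝓝[≠] 0) (𝓝 (L / 2)) := by
  have hG_tendsto : Tendsto G (𝓝 0) (𝓝 0) := by
    simpa [hG0] using hG.self_of_nhds.continuousAt.tendsto
  refine tendsto_div_pow_nhdsNE_of_hasDerivAt (n := 1)
    (eventually_nhdsWithin_of_eventually_nhds hG) (tendsto_nhdsWithin_of_tendsto_nhds hG_tendsto) ?_
  convert hg.div_const 2 using 1
  ext x
  push_cast
  ring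

theorem tendsto_sq_sub_two_mul_div_cube (hG : ∀ᶠ x in 𝓝 0, HasDerivAt G (g x) x)
    (hg : ∀ᶠ x in 𝓝 0, HasDerivAt g (g' x) x) (hg' : ∀ᶠ x in 𝓝 0, HasDerivAt g' (g'' x) x)
    (hg'' : ContinuousAt g'' 0) (h0 : g 0 = 0) (hG0 : G 0 = 0)
    (hGx : Tendsto (fun x => G x / x ^ 2) (𝓝[≠] 0) (𝓝 (1 / 2))) :
    Tendsto (fun x => (g x ^ 2 - 2 * G x * g' x) / x ^ 3) (𝓝[≠] 0) (𝓝 (-g'' 0 / 3)) := by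
  have hN : ∀ᶠ x in 𝓝 0,
      HasDerivAt (fun y => g y ^ 2 - 2 * G y * g' y) (-2 * G x * g'' x) x := by
    filter_upwards [hG, hg, hg'] with x hGx hgx hg'x
    refine ((hgx.fun_pow 2).fun_sub ((hGx.const_mul 2).fun_mul hg'x)).congr_deriv ?_
    push_cast
    ring
  refine tendsto_div_pow_nhdsNE_of_hasDerivAt (n := 2)
    (eventually_nhdsWithin_of_eventually_nhds hN) (tendsto_nhdsWithin_of_tendsto_nhds ?_) ?_
  · simpa [h0, hG0] using hN.self_of_nhds.continuousAt.tendsto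
  · convert (hGx.const_mul (-2 / 3)).mul (tendsto_nhdsWithin_of_tendsto_nhds hg''.tendsto)
      using 1
    · ext x
      push_cast
      ring
    · congr 1
      ring

end

theorem period_f0_limit (g : ℝ → ℝ) (hg : AnalyticAt ℝ g 0)
    (h0 : g 0 = 0) (h1 : deriv g 0 = 1)
    (G : ℝ → ℝ) (hG : ∀ x, G x = ∫ t in (0:ℝ)..x, g t) :
    Tendsto (fun x => deriv (fun y => G y / (g y) ^ 2) x) (nhdsWithin 0 {(0:ℝ)}ᶜ)
      (nhds (-(iteratedDeriv 2 g 0) / 3)) := by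
  have hA : ∀ᶠ x in 𝓝 0, AnalyticAt ℝ g x := hg.eventually_analyticAt
  have hgd : ∀ᶠ x in 𝓝 0, HasDerivAt g (deriv g x) x :=
    hA.mono fun x hx => hx.differentiableAt.hasDerivAt
  have hg'd : ∀ᶠ x in 𝓝 0, HasDerivAt (deriv g) (deriv (deriv g) x) x :=
    hA.mono fun x hx => hx.deriv.differentiableAt.hasDerivAt
  have hGd : ∀ᶠ x in 𝓝 0, HasDerivAt G (g x) x := by
    rw [funext hG]
    exact eventually_hasDerivAt_integral (hA.mono fun x hx => hx.continuousAt)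
  have hG0 : G 0 = 0 := by simp [hG]
  have hg0 : HasDerivAt g 1 0 := h1 ▸ hgd.self_of_nhds
  have hslope : Tendsto (fun x => g x / x) (𝓝[≠] 0) (𝓝 1) := by
    simpa [slope_fun_def_field, h0] using hg0.tendsto_slope
  have hN := tendsto_sq_sub_two_mul_div_cube hGd hgd hg'd hg.deriv.deriv.continuousAt h0 hG0
    (by simpa using tendsto_primitive_div_sq hGd hG0 hslope)
  have hlim : -(iteratedDeriv 2 g 0) / 3 = -deriv (deriv g) 0 / 3 / 1 ^ 3 := by
    simp [iteratedDeriv_succ]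
  rw [hlim]
  refine (hN.div (hslope.pow 3) (by norm_num)).congr' ?_
  filter_upwards [self_mem_nhdsWithin, hg0.eventually_ne one_ne_zero (c := 0),
    eventually_nhdsWithin_of_eventually_nhds (hGd.and hgd)]
    with x (hx : x ≠ 0) hgx ⟨hGx, hgx'⟩
  rw [Pi.div_apply, (hGx.fun_div (hgx'.fun_pow 2) (pow_ne_zero 2 hgx)).deriv]
  field_simp
  ring
end

section
/- Let g : [a,b] → ℝ be C² with a < 0 < b, g(0)=0, g'(0)=1, x·g(x)>0 for x ∈ [a,b]\{0}, and G(x)=∫₀ˣ g(t)dt. If x·g''(x) < 0 for all x ∈ [a,b]\{0}, then g(x)² - 2 G(x) g'(x) > 0 for all x ∈ [a,b]\{0}. -/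
/-!
With `F = g² - 2 G g'` one has `F' = 2 g g' - 2 g g' - 2 G g'' = -2 G g''` and `F 0 = 0`.
Since `x g(x) > 0`, the potential `G` is positive away from `0`, so the concavity condition
`x g''(x) < 0` gives `x F'(x) > 0`: `F` decreases on `[a, 0]` and increases on `[0, b]`,
hence is positive on `[a, b] \ {0}`.
-/

open Set

lemma intervalIntegral_pos_of_mul_pos {g : ℝ → ℝ} {x : ℝ} (hg : ContinuousOn g (uIcc 0 x))
    (hx : x ≠ 0) (hpos : ∀ t ∈ uIcc 0 x, t ≠ 0 → 0 < t * g t) :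
    0 < ∫ t in (0 : ℝ)..x, g t := by
  rcases hx.lt_or_gt with hneg | hpos'
  · have hint : 0 < ∫ t in x..(0 : ℝ), -g t := by
      refine intervalIntegral.intervalIntegral_pos_of_pos_on
        (hg.neg.intervalIntegrable.symm) (fun t ht => ?_) hneg
      have := hpos t (by rw [uIcc_of_ge hneg.le]; exact ⟨ht.1.le, ht.2.le⟩) ht.2.ne
      nlinarith [ht.2]
    rw [intervalIntegral.integral_neg] at hint
    rw [intervalIntegral.integral_symm]
    linarith
  · refine intervalIntegral.intervalIntegral_pos_of_pos_on hg.intervalIntegrable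
      (fun t ht => ?_) hpos'
    have := hpos t (by rw [uIcc_of_le hpos'.le]; exact ⟨ht.1.le, ht.2.le⟩) ht.1.ne'
    nlinarith [ht.1]

lemma hasDerivAt_sq_sub_two_mul_mul {g g' g'' G : ℝ → ℝ} {x : ℝ}
    (hG : HasDerivAt G (g x) x) (hg : HasDerivAt g (g' x) x) (hg' : HasDerivAt g' (g'' x) x) :
    HasDerivAt (fun y => g y ^ 2 - 2 * G y * g' y) (-2 * G x * g'' x) x := by
  exact ((hg.fun_pow 2).fun_sub ((hG.const_mul 2).fun_mul hg')).congr_deriv (by ring)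

lemma lt_of_mul_deriv_pos {F : ℝ → ℝ} {a b : ℝ} (ha : a ≤ 0) (hb : 0 ≤ b)
    (hF : ContinuousOn F (Icc a b)) (hderiv : ∀ x ∈ Ioo a b, x ≠ 0 → 0 < x * deriv F x) :
    ∀ x ∈ Icc a b, x ≠ 0 → F 0 < F x := by
  intro x hx hx0
  rcases hx0.lt_or_gt with hneg | hpos
  · have hanti : StrictAntiOn F (Icc a 0) := by
      refine strictAntiOn_of_deriv_neg (convex_Icc a 0)
        (hF.mono (Icc_subset_Icc_right hb)) fun y hy => ?_
      rw [interior_Icc] at hy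
      have := hderiv y ⟨hy.1, hy.2.trans_le hb⟩ hy.2.ne
      nlinarith [hy.2]
    exact hanti ⟨hx.1, hneg.le⟩ ⟨ha, le_rfl⟩ hneg
  · have hmono : StrictMonoOn F (Icc 0 b) := by
      refine strictMonoOn_of_deriv_pos (convex_Icc 0 b)
        (hF.mono (Icc_subset_Icc_left ha)) fun y hy => ?_
      rw [interior_Icc] at hy
      have := hderiv y ⟨ha.trans_lt hy.1, hy.2⟩ hy.1.ne'
      nlinarith [hy.1]
    exact hmono ⟨le_rfl, hb⟩ ⟨hpos.le, hx.2⟩ hpos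

theorem thm21_first_implication_general (g : ℝ → ℝ) (a b : ℝ) (ha : a < 0) (hb : 0 < b)
    (hg : ContDiff ℝ 2 g) (h0 : g 0 = 0)
    (hxg : ∀ x ∈ Icc a b, x ≠ 0 → 0 < x * g x)
    (G : ℝ → ℝ) (hG : ∀ x, G x = ∫ t in (0:ℝ)..x, g t)
    (hconc : ∀ x ∈ Icc a b, x ≠ 0 → x * iteratedDeriv 2 g x < 0) :
    ∀ x ∈ Icc a b, x ≠ 0 → g x ^ 2 - 2 * G x * deriv g x > 0 := by
  have hg' : ContDiff ℝ 1 (deriv g) := hg.iterate_deriv' 1 1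
  have hGderiv : ∀ x, HasDerivAt G (g x) x := by
    rw [show G = _ from funext hG]
    exact fun x => (hg.continuous.integral_hasStrictDerivAt 0 x).hasDerivAt
  have hFderiv (x : ℝ) := hasDerivAt_sq_sub_two_mul_mul (hGderiv x)
    ((hg.differentiable two_ne_zero).differentiableAt.hasDerivAt)
    ((hg'.differentiable one_ne_zero).differentiableAt.hasDerivAt)
  have hGpos : ∀ x ∈ Icc a b, x ≠ 0 → 0 < G x := fun x hx hx0 =>
    hG x ▸ intervalIntegral_pos_of_mul_pos hg.continuous.continuousOn hx0 fun t ht =>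
      hxg t (uIcc_subset_Icc ⟨ha.le, hb.le⟩ hx ht)
  intro x hx hx0
  have hFx := lt_of_mul_deriv_pos ha.le hb.le
    (fun y _ => (hFderiv y).continuousAt.continuousWithinAt) (fun y hy hy0 => ?_) x hx hx0
  · simpa [h0, hG 0] using hFx
  · have hy := Ioo_subset_Icc_self hy
    have hg'' := hconc y hy hy0
    rw [iteratedDeriv_succ, iteratedDeriv_one] at hg''
    rw [(hFderiv y).deriv]
    nlinarith [hGpos y hy hy0]

theorem thm21_first_implication (g : ℝ → ℝ) (a b : ℝ) (ha : a < 0) (hb : 0 < b)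
    (hg : ContDiff ℝ 2 g) (h0 : g 0 = 0) (h1 : deriv g 0 = 1)
    (hxg : ∀ x ∈ Icc a b, x ≠ 0 → 0 < x * g x)
    (G : ℝ → ℝ) (hG : ∀ x, G x = ∫ t in (0:ℝ)..x, g t)
    (hconc : ∀ x ∈ Icc a b, x ≠ 0 → x * iteratedDeriv 2 g x < 0) :
    ∀ x ∈ Icc a b, x ≠ 0 → g x ^ 2 - 2 * G x * deriv g x > 0 :=
  thm21_first_implication_general g a b ha hb hg h0 hxg G hG hconc
end

section
/- Let g : [a,b] → ℝ be C¹ with a < 0 < b, g(0)=0, g'(0)=1, x·g(x)>0 for x ∈ [a,b]\{0}, and G(x)=∫₀ˣ g(t)dt. If g(x)² - 2 G(x) g'(x) > 0 for all x ∈ [a,b]\{0}, then x · d/dx (g(x)/x) < 0 for all x ∈ [a,b]\{0}. -/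
/-!
On `(0, b]`, where `g > 0`, put `u = 2G/g`. Then `u' = 1 + (g² - 2Gg')/g² ≥ 1`, so `u(x) - x` is
nondecreasing. Since `G' = g` has the sign of `x`, `G ≥ 0`, so `u ≥ 0`, and letting the left
endpoint tend to `0` gives `x g(x) ≤ 2G(x)`. Hence `x g g' ≤ 2G g' < g²` whenever `g' > 0`, i.e.
`x g'(x) < g(x)`, which is the sign of `x · (g(x)/x)' = (x g' - g)/x`. The side `[a, 0)` follows
by the reflection `x ↦ -g(-x)`.
-/

open Set

lemma hasDerivAt_comp_neg {f : ℝ → ℝ} {f' x : ℝ} (h : HasDerivAt f f' (-x)) :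
    HasDerivAt (fun y => f (-y)) (-f') x := by
  rw [← mul_neg_one]
  exact h.comp x (hasDerivAt_neg x)

section Primitive

variable {g g' G : ℝ → ℝ}

lemma monotoneOn_two_mul_div_sub_id {D : Set ℝ} (hD : Convex ℝ D)
    (hg : ∀ x ∈ D, HasDerivAt g (g' x) x) (hG : ∀ x ∈ D, HasDerivAt G (g x) x)
    (hg0 : ∀ x ∈ D, g x ≠ 0) (hyp : ∀ x ∈ D, 2 * G x * g' x ≤ g x ^ 2) :
    MonotoneOn (fun x => 2 * G x / g x - x) D := by
  have hu : ∀ x ∈ D, HasDerivAt (fun x => 2 * G x / g x - x)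
      ((2 * g x * g x - 2 * G x * g' x) / g x ^ 2 - 1) x := fun x hx =>
    ((((hG x hx).const_mul 2).div (hg x hx) (hg0 x hx))).sub (hasDerivAt_id x)
  refine monotoneOn_of_deriv_nonneg hD
    (fun x hx => (hu x hx).continuousAt.continuousWithinAt)
    (fun x hx => (hu x (interior_subset hx)).differentiableAt.differentiableWithinAt)
    fun x hx => ?_
  have hx := interior_subset hx
  rw [(hu x hx).deriv, show (2 * g x * g x - 2 * G x * g' x) / g x ^ 2 - 1
    = (g x ^ 2 - 2 * G x * g' x) / g x ^ 2 by field_simp [hg0 x hx]; ring]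
  exact div_nonneg (sub_nonneg.2 (hyp x hx)) (sq_nonneg _)

variable {b : ℝ}

lemma mul_le_two_mul_primitive (hg : ∀ x ∈ Ioc 0 b, HasDerivAt g (g' x) x)
    (hG : ∀ x ∈ Ioc 0 b, HasDerivAt G (g x) x) (hgpos : ∀ x ∈ Ioc 0 b, 0 < g x)
    (hGnonneg : ∀ x ∈ Ioc 0 b, 0 ≤ G x) (hyp : ∀ x ∈ Ioc 0 b, 2 * G x * g' x ≤ g x ^ 2) :
    ∀ x ∈ Ioc 0 b, x * g x ≤ 2 * G x := by
  have hmono := monotoneOn_two_mul_div_sub_id (convex_Ioc 0 b) hg hG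
    (fun x hx => (hgpos x hx).ne') hyp
  have hu : ∀ x ∈ Ioc 0 b, 0 ≤ 2 * G x / g x := fun x hx =>
    div_nonneg (by linarith [hGnonneg x hx]) (hgpos x hx).le
  intro x hx
  suffices x ≤ 2 * G x / g x by rwa [le_div_iff₀ (hgpos x hx)] at this
  refine le_of_forall_sub_le fun ε hε => ?_
  rcases le_or_gt x ε with hxε | hεx
  · linarith [hu x hx]
  · have hε' : ε ∈ Ioc 0 b := ⟨hε, hεx.le.trans hx.2⟩
    linarith [hmono hε' hx hεx.le, hu ε hε']

lemma mul_deriv_lt_of_mem_Ioc (hg : ∀ x ∈ Ioc 0 b, HasDerivAt g (g' x) x)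
    (hG : ∀ x ∈ Ioc 0 b, HasDerivAt G (g x) x) (hgpos : ∀ x ∈ Ioc 0 b, 0 < g x)
    (hGnonneg : ∀ x ∈ Ioc 0 b, 0 ≤ G x) (hyp : ∀ x ∈ Ioc 0 b, 2 * G x * g' x < g x ^ 2) :
    ∀ x ∈ Ioc 0 b, x * g' x < g x := by
  intro x hx
  have hxg := mul_le_two_mul_primitive hg hG hgpos hGnonneg (fun y hy => (hyp y hy).le) x hx
  have hgx := hgpos x hx
  rcases le_or_gt (g' x) 0 with hg' | hg'
  · nlinarith [hx.1]
  · nlinarith [mul_le_mul_of_nonneg_right hxg hg'.le, hyp x hx]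

lemma lt_mul_deriv_of_mem_Ico {a : ℝ} (hg : ∀ x ∈ Ico a 0, HasDerivAt g (g' x) x)
    (hG : ∀ x ∈ Ico a 0, HasDerivAt G (g x) x) (hgneg : ∀ x ∈ Ico a 0, g x < 0)
    (hGnonneg : ∀ x ∈ Ico a 0, 0 ≤ G x) (hyp : ∀ x ∈ Ico a 0, 2 * G x * g' x < g x ^ 2) :
    ∀ x ∈ Ico a 0, g x < x * g' x := by
  have neg_mem {y : ℝ} (hy : y ∈ Ioc 0 (-a)) : -y ∈ Ico a 0 :=
    ⟨by linarith [hy.2], by linarith [hy.1]⟩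
  have hrefl := mul_deriv_lt_of_mem_Ioc (g := fun y => -g (-y)) (g' := fun y => g' (-y))
    (G := fun y => G (-y)) (b := -a)
    (fun y hy => neg_neg (g' (-y)) ▸ (hasDerivAt_comp_neg (hg _ (neg_mem hy))).neg)
    (fun y hy => hasDerivAt_comp_neg (hG _ (neg_mem hy)))
    (fun y hy => neg_pos.2 (hgneg _ (neg_mem hy)))
    (fun y hy => hGnonneg _ (neg_mem hy))
    (fun y hy => by simpa using hyp _ (neg_mem hy))
  intro x hx
  have := hrefl (-x) ⟨by linarith [hx.2], by linarith [hx.1]⟩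
  simp only [neg_neg] at this
  linarith

lemma le_of_hasDerivAt_of_mul_pos {x : ℝ} (hG : ∀ t ∈ uIcc 0 x, HasDerivAt G (g t) t)
    (hsign : ∀ t ∈ uIcc 0 x, t ≠ 0 → 0 < t * g t) : G 0 ≤ G x := by
  have hcont : ContinuousOn G (uIcc 0 x) := fun t ht => (hG t ht).continuousAt.continuousWithinAt
  have hdiff : DifferentiableOn ℝ G (interior (uIcc 0 x)) := fun t ht =>
    (hG t (interior_subset ht)).differentiableAt.differentiableWithinAt
  rcases le_total 0 x with hx | hx
  · rw [uIcc_of_le hx] at hG hsign hcont hdiff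
    refine monotoneOn_of_deriv_nonneg (convex_Icc 0 x) hcont hdiff (fun t ht => ?_)
      (left_mem_Icc.2 hx) (right_mem_Icc.2 hx) hx
    rw [interior_Icc] at ht
    rw [(hG t (Ioo_subset_Icc_self ht)).deriv]
    exact (pos_of_mul_pos_right (hsign t (Ioo_subset_Icc_self ht) ht.1.ne') ht.1.le).le
  · rw [uIcc_of_ge hx] at hG hsign hcont hdiff
    refine antitoneOn_of_deriv_nonpos (convex_Icc x 0) hcont hdiff (fun t ht => ?_)
      (left_mem_Icc.2 hx) (right_mem_Icc.2 hx) hx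
    rw [interior_Icc] at ht
    rw [(hG t (Ioo_subset_Icc_self ht)).deriv]
    exact (neg_of_mul_pos_right (hsign t (Ioo_subset_Icc_self ht) ht.2.ne) ht.2.le).le

end Primitive

theorem thm21_second_implication_general (g : ℝ → ℝ) (a b : ℝ) (ha : a < 0) (hb : 0 < b)
    (hg : ContDiff ℝ 1 g)
    (hxg : ∀ x ∈ Icc a b, x ≠ 0 → 0 < x * g x)
    (G : ℝ → ℝ) (hG : ∀ x, G x = ∫ t in (0:ℝ)..x, g t)
    (hyp : ∀ x ∈ Icc a b, x ≠ 0 → g x ^ 2 - 2 * G x * deriv g x > 0) :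
    ∀ x ∈ Icc a b, x ≠ 0 → x * deriv (fun y => g y / y) x < 0 := by
  have hgd : ∀ x, HasDerivAt g (deriv g x) x := fun x =>
    (hg.differentiable one_ne_zero x).hasDerivAt
  have hGd : ∀ x, HasDerivAt G (g x) x := fun x => by
    simpa [← funext hG] using (hg.continuous.integral_hasStrictDerivAt 0 x).hasDerivAt
  have hGnonneg : ∀ x ∈ Icc a b, 0 ≤ G x := fun x hx => by
    simpa [hG 0] using le_of_hasDerivAt_of_mul_pos (fun t _ => hGd t)
      fun t ht => hxg t (uIcc_subset_Icc ⟨ha.le, hb.le⟩ hx ht)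
  have hIoc : Ioc 0 b ⊆ Icc a b := Ioc_subset_Icc_self.trans (Icc_subset_Icc ha.le le_rfl)
  have hIco : Ico a 0 ⊆ Icc a b := Ico_subset_Icc_self.trans (Icc_subset_Icc le_rfl hb.le)
  intro x hx hx0
  have key : x * (deriv g x * x - g x) < 0 := by
    rcases hx0.lt_or_gt with hneg | hpos
    · have := lt_mul_deriv_of_mem_Ico (fun y _ => hgd y) (fun y _ => hGd y)
        (fun y hy => neg_of_mul_pos_right (hxg y (hIco hy) hy.2.ne) hy.2.le)
        (fun y hy => hGnonneg y (hIco hy))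
        (fun y hy => by linarith [hyp y (hIco hy) hy.2.ne]) x ⟨hx.1, hneg⟩
      nlinarith
    · have := mul_deriv_lt_of_mem_Ioc (fun y _ => hgd y) (fun y _ => hGd y)
        (fun y hy => pos_of_mul_pos_right (hxg y (hIoc hy) hy.1.ne') hy.1.le)
        (fun y hy => hGnonneg y (hIoc hy))
        (fun y hy => by linarith [hyp y (hIoc hy) hy.1.ne']) x ⟨hpos, hx.2⟩
      nlinarith
  have hquot : HasDerivAt (fun y => g y / y) ((deriv g x * x - g x * 1) / x ^ 2) x :=
    (hgd x).div (hasDerivAt_id x) hx0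
  rw [hquot.deriv]
  calc x * ((deriv g x * x - g x * 1) / x ^ 2) = x * (deriv g x * x - g x) / x ^ 2 := by ring
    _ < 0 := div_neg_of_neg_of_pos key (by positivity)

theorem thm21_second_implication (g : ℝ → ℝ) (a b : ℝ) (ha : a < 0) (hb : 0 < b)
    (hg : ContDiff ℝ 1 g) (h0 : g 0 = 0) (h1 : deriv g 0 = 1)
    (hxg : ∀ x ∈ Icc a b, x ≠ 0 → 0 < x * g x)
    (G : ℝ → ℝ) (hG : ∀ x, G x = ∫ t in (0:ℝ)..x, g t)
    (hyp : ∀ x ∈ Icc a b, x ≠ 0 → g x ^ 2 - 2 * G x * deriv g x > 0) :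
    ∀ x ∈ Icc a b, x ≠ 0 → x * deriv (fun y => g y / y) x < 0 :=
  thm21_second_implication_general g a b ha hb hg hxg G hG hyp
end

section
/- Let g : [a,b] → ℝ be C² with a < 0 < b, g(0)=0, g'(0)=1, x·g(x)>0 for x ∈ [a,b]\{0}, and G(x)=∫₀ˣ g(t)dt. If x·g''(x) > 0 for all x ∈ [a,b]\{0}, then g(x)² - 2 G(x) g'(x) < 0 for all x ∈ [a,b]\{0}, and consequently x · d/dx(g(x)/x) > 0 for all x ∈ [a,b]\{0}. -/
/-! Put `E = 2 G g' - g²` and `φ x = x g'(x) - g(x)`, so that `E' = 2 G g''`, `φ' = x g''` and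
`E 0 = φ 0 = 0`. Since `G' = g` has the sign of `x`, `G > 0` away from `0`; then `x g'' > 0` gives
`E` a strict minimum at the origin and makes `φ` strictly increasing. Hence `E > 0` and
`x φ(x) > 0` away from `0`, and `x (g/x)' = x φ(x) / x²`. -/

open Set intervalIntegral

section SignFromDerivative

variable {f f' : ℝ → ℝ}

theorem lt_of_hasDerivAt_pos_on_Ioo {x y : ℝ} (hxy : x < y)
    (hf : ∀ t ∈ Icc x y, HasDerivAt f (f' t) t) (hpos : ∀ t ∈ Ioo x y, 0 < f' t) :
    f x < f y :=
  strictMonoOn_of_hasDerivWithinAt_pos (convex_Icc x y)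
    (fun t ht => (hf t ht).continuousAt.continuousWithinAt)
    (fun t ht => (hf t (interior_subset ht)).hasDerivWithinAt)
    (by simpa only [interior_Icc] using hpos)
    (left_mem_Icc.2 hxy.le) (right_mem_Icc.2 hxy.le) hxy

variable {s : Set ℝ}

theorem apply_zero_lt_of_mul_hasDerivAt_pos (hs : s.OrdConnected) (h0 : (0 : ℝ) ∈ s)
    (hf : ∀ t ∈ s, HasDerivAt f (f' t) t) (hf' : ∀ t ∈ s, t ≠ 0 → 0 < t * f' t)
    {x : ℝ} (hx : x ∈ s) (hx0 : x ≠ 0) : f 0 < f x := by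
  rcases hx0.lt_or_gt with hneg | hpos
  · have hseg : Icc x 0 ⊆ s := hs.out hx h0
    have := lt_of_hasDerivAt_pos_on_Ioo (f := fun t => -f t) (f' := fun t => -f' t) hneg
      (fun t ht => (hf t (hseg ht)).neg)
      (fun t ht => by nlinarith [hf' t (hseg (Ioo_subset_Icc_self ht)) ht.2.ne, ht.2])
    linarith
  · have hseg : Icc 0 x ⊆ s := hs.out h0 hx
    exact lt_of_hasDerivAt_pos_on_Ioo hpos (fun t ht => hf t (hseg ht))
      (fun t ht => by nlinarith [hf' t (hseg (Ioo_subset_Icc_self ht)) ht.1.ne', ht.1])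

theorem mul_sub_apply_zero_pos_of_hasDerivAt_pos (hs : s.OrdConnected) (h0 : (0 : ℝ) ∈ s)
    (hf : ∀ t ∈ s, HasDerivAt f (f' t) t) (hf' : ∀ t ∈ s, t ≠ 0 → 0 < f' t)
    {x : ℝ} (hx : x ∈ s) (hx0 : x ≠ 0) : 0 < x * (f x - f 0) := by
  rcases hx0.lt_or_gt with hneg | hpos
  · have hseg : Icc x 0 ⊆ s := hs.out hx h0
    have := lt_of_hasDerivAt_pos_on_Ioo hneg (fun t ht => hf t (hseg ht))
      (fun t ht => hf' t (hseg (Ioo_subset_Icc_self ht)) ht.2.ne)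
    nlinarith
  · have hseg : Icc 0 x ⊆ s := hs.out h0 hx
    have := lt_of_hasDerivAt_pos_on_Ioo hpos (fun t ht => hf t (hseg ht))
      (fun t ht => hf' t (hseg (Ioo_subset_Icc_self ht)) ht.1.ne')
    nlinarith

end SignFromDerivative

section Derivatives

variable {G g g' g'' : ℝ → ℝ} {x : ℝ}

theorem hasDerivAt_two_mul_mul_sub_sq (hG : HasDerivAt G (g x) x) (hg : HasDerivAt g (g' x) x)
    (hg' : HasDerivAt g' (g'' x) x) :
    HasDerivAt (fun y => 2 * G y * g' y - g y ^ 2) (2 * G x * g'' x) x :=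
  (((hG.const_mul 2).fun_mul hg').fun_sub (hg.fun_pow 2)).congr_deriv (by norm_num)

theorem hasDerivAt_mul_sub (hg : HasDerivAt g (g' x) x) (hg' : HasDerivAt g' (g'' x) x) :
    HasDerivAt (fun y => y * g' y - g y) (x * g'' x) x :=
  (((hasDerivAt_id' x).fun_mul hg').fun_sub hg).congr_deriv (by ring)

theorem mul_deriv_div_self (hg : DifferentiableAt ℝ g x) (hx : x ≠ 0) :
    x * deriv (fun y => g y / y) x = x * (x * deriv g x - g x) / x ^ 2 := by
  rw [(hg.hasDerivAt.fun_div (hasDerivAt_id' x) hx).deriv]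
  field_simp

theorem ContDiff.hasDerivAt_deriv_iteratedDeriv_two (hg : ContDiff ℝ 2 g) (x : ℝ) :
    HasDerivAt (deriv g) (iteratedDeriv 2 g x) x := by
  have hd : Differentiable ℝ (deriv g) := by
    simpa only [iteratedDeriv_one] using hg.differentiable_iteratedDeriv 1 (by norm_num)
  rw [iteratedDeriv_succ, iteratedDeriv_one]
  exact (hd x).hasDerivAt

end Derivatives

theorem thm21_decreasing_chain_general (g : ℝ → ℝ) (a b : ℝ) (ha : a < 0) (hb : 0 < b)
    (hg : ContDiff ℝ 2 g) (h0 : g 0 = 0)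
    (hxg : ∀ x ∈ Icc a b, x ≠ 0 → 0 < x * g x)
    (G : ℝ → ℝ) (hG : ∀ x, G x = ∫ t in (0:ℝ)..x, g t)
    (hconv : ∀ x ∈ Icc a b, x ≠ 0 → 0 < x * iteratedDeriv 2 g x) :
    (∀ x ∈ Icc a b, x ≠ 0 → g x ^ 2 - 2 * G x * deriv g x < 0) ∧
    (∀ x ∈ Icc a b, x ≠ 0 → 0 < x * deriv (fun y => g y / y) x) := by
  obtain rfl : G = fun x => ∫ t in (0:ℝ)..x, g t := funext hG
  have h0ab : (0 : ℝ) ∈ Icc a b := ⟨ha.le, hb.le⟩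
  have hgd : Differentiable ℝ g := hg.differentiable (by norm_num)
  have hG' (x : ℝ) : HasDerivAt (fun x => ∫ t in (0:ℝ)..x, g t) (g x) x :=
    (hg.continuous.integral_hasStrictDerivAt 0 x).hasDerivAt
  have hg' (x : ℝ) : HasDerivAt g (deriv g x) x := (hgd x).hasDerivAt
  have hg'' := hg.hasDerivAt_deriv_iteratedDeriv_two
  have hGpos : ∀ x ∈ Icc a b, x ≠ 0 → 0 < ∫ t in (0:ℝ)..x, g t := fun x hx hx0 => by
    simpa only [integral_same] using
      apply_zero_lt_of_mul_hasDerivAt_pos ordConnected_Icc h0ab (fun y _ => hG' y) hxg hx hx0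
  refine ⟨fun x hx hx0 => ?_, fun x hx hx0 => ?_⟩
  · have := apply_zero_lt_of_mul_hasDerivAt_pos ordConnected_Icc h0ab
      (fun y _ => hasDerivAt_two_mul_mul_sub_sq (hG' y) (hg' y) (hg'' y))
      (fun y hy hy0 => by nlinarith [mul_pos (hGpos y hy hy0) (hconv y hy hy0)])
      hx hx0
    simp only [integral_same, h0] at this
    linarith
  · rw [mul_deriv_div_self (hgd x) hx0]
    have := mul_sub_apply_zero_pos_of_hasDerivAt_pos ordConnected_Icc h0ab
      (fun y _ => hasDerivAt_mul_sub (hg' y) (hg'' y)) hconv hx hx0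
    simp only [zero_mul, h0, sub_zero] at this
    positivity

theorem thm21_decreasing_chain (g : ℝ → ℝ) (a b : ℝ) (ha : a < 0) (hb : 0 < b)
    (hg : ContDiff ℝ 2 g) (h0 : g 0 = 0) (h1 : deriv g 0 = 1)
    (hxg : ∀ x ∈ Icc a b, x ≠ 0 → 0 < x * g x)
    (G : ℝ → ℝ) (hG : ∀ x, G x = ∫ t in (0:ℝ)..x, g t)
    (hconv : ∀ x ∈ Icc a b, x ≠ 0 → 0 < x * iteratedDeriv 2 g x) :
    (∀ x ∈ Icc a b, x ≠ 0 → g x ^ 2 - 2 * G x * deriv g x < 0) ∧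
    (∀ x ∈ Icc a b, x ≠ 0 → 0 < x * deriv (fun y => g y / y) x) :=
  thm21_decreasing_chain_general g a b ha hb hg h0 hxg G hG hconv
end

section
/- Let g be C² with g(0)=0, g'(0)=1. If g(x)² - 2 G(x) g'(x) > 0 for all x ≠ 0 in a neighborhood of 0, where G(x)=∫₀ˣ g(t)dt, then g''(0) = 0. -/
/-! With `F = g² - 2 G g'` we have `F 0 = 0` and, since `G' = g`, the terms `2 g g'` cancel in
`F' = -2 G g''`. Because `g 0 = 0 < g' 0`, the primitive `G` is positive on a punctured
neighbourhood of `0`; so if `g'' 0 ≠ 0`, then `F` is strictly monotone near `0` and is negative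
on one side of `0`. -/

open Filter Set Topology

section LocalExtrema

variable {f : ℝ → ℝ} {a : ℝ}

theorem eventually_nhdsGT_lt_of_deriv_pos (hf : ContinuousAt f a)
    (hd : ∀ᶠ x in 𝓝[>] a, 0 < deriv f x) : ∀ᶠ x in 𝓝[>] a, f a < f x := by
  obtain ⟨b, hab, hb⟩ := (nhdsGT_basis a).eventually_iff.1 hd
  have hmono : StrictMonoOn f (Ico a b) := by
    refine strictMonoOn_of_deriv_pos (convex_Ico a b) (fun x hx ↦ ?_) (by simpa using hb)
    rcases hx.1.eq_or_lt with rfl | hax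
    · exact hf.continuousWithinAt
    · exact (differentiableAt_of_deriv_ne_zero (hb ⟨hax, hx.2⟩).ne').continuousAt.continuousWithinAt
  filter_upwards [Ioo_mem_nhdsGT hab] with x hx
  exact hmono (left_mem_Ico.2 hab) (Ioo_subset_Ico_self hx) hx.1

theorem eventually_nhdsLT_lt_of_deriv_neg (hf : ContinuousAt f a)
    (hd : ∀ᶠ x in 𝓝[<] a, deriv f x < 0) : ∀ᶠ x in 𝓝[<] a, f a < f x := by
  obtain ⟨b, hba, hb⟩ := (nhdsLT_basis a).eventually_iff.1 hd
  have hanti : StrictAntiOn f (Ioc b a) := by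
    refine strictAntiOn_of_deriv_neg (convex_Ioc b a) (fun x hx ↦ ?_) (by simpa using hb)
    rcases hx.2.eq_or_lt with rfl | hxa
    · exact hf.continuousWithinAt
    · exact (differentiableAt_of_deriv_ne_zero (hb ⟨hx.1, hxa⟩).ne).continuousAt.continuousWithinAt
  filter_upwards [Ioo_mem_nhdsLT hba] with x hx
  exact hanti (Ioo_subset_Ioc_self hx) (right_mem_Ioc.2 hba) hx.2

theorem eventually_nhdsNE_lt_of_sign_deriv (hf : ContinuousAt f a)
    (hd : ∀ᶠ x in 𝓝[≠] a, SignType.sign (deriv f x) = SignType.sign (x - a)) :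
    ∀ᶠ x in 𝓝[≠] a, f a < f x := by
  rw [← nhdsLT_sup_nhdsGT, eventually_sup]
  exact ⟨eventually_nhdsLT_lt_of_deriv_neg hf (deriv_neg_left_of_sign_deriv hd),
    eventually_nhdsGT_lt_of_deriv_pos hf (deriv_pos_right_of_sign_deriv hd)⟩

theorem eq_zero_of_eventually_lt_of_deriv_eq_mul {φ c : ℝ → ℝ} (hf : ContinuousAt f a)
    (hmax : ∀ᶠ x in 𝓝[≠] a, f x < f a) (hφ : ∀ᶠ x in 𝓝[≠] a, 0 < φ x)
    (hc : ContinuousAt c a) (hd : ∀ᶠ x in 𝓝[≠] a, deriv f x = φ x * c x) : c a = 0 := by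
  by_contra hca
  rcases lt_or_gt_of_ne hca with hneg | hpos
  · have hd' : ∀ᶠ x in 𝓝[<] a, deriv f x < 0 := by
      filter_upwards [nhdsLT_le_nhdsNE a (hφ.and hd),
        nhdsWithin_le_nhds (hc.eventually (gt_mem_nhds hneg))] with x ⟨hφx, hdx⟩ hcx
      rw [hdx]
      exact mul_neg_of_pos_of_neg hφx hcx
    obtain ⟨x, hlt, hgt⟩ := ((eventually_nhdsLT_lt_of_deriv_neg hf hd').and
      (nhdsLT_le_nhdsNE a hmax)).exists
    exact hlt.not_gt hgt
  · have hd' : ∀ᶠ x in 𝓝[>] a, 0 < deriv f x := by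
      filter_upwards [nhdsGT_le_nhdsNE a (hφ.and hd),
        nhdsWithin_le_nhds (hc.eventually (lt_mem_nhds hpos))] with x ⟨hφx, hdx⟩ hcx
      rw [hdx]
      exact mul_pos hφx hcx
    obtain ⟨x, hlt, hgt⟩ := ((eventually_nhdsGT_lt_of_deriv_pos hf hd').and
      (nhdsGT_le_nhdsNE a hmax)).exists
    exact hlt.not_gt hgt

end LocalExtrema

theorem eventually_nhdsNE_integral_pos {g : ℝ → ℝ} {a : ℝ} (hg : Continuous g) (ha : g a = 0)
    (hga : 0 < deriv g a) : ∀ᶠ x in 𝓝[≠] a, 0 < ∫ t in a..x, g t := by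
  have hsign : ∀ᶠ x in 𝓝[≠] a,
      SignType.sign (deriv (fun u ↦ ∫ t in a..u, g t) x) = SignType.sign (x - a) := by
    filter_upwards [nhdsWithin_le_nhds (eventually_nhdsWithin_sign_eq_of_deriv_pos hga ha)]
      with x hx
    rwa [hg.deriv_integral]
  simpa using eventually_nhdsNE_lt_of_sign_deriv
    (hg.integral_hasStrictDerivAt a a).hasDerivAt.continuousAt hsign

theorem HasDerivAt.two_mul_mul_sub_sq {g g' G : ℝ → ℝ} {g'' x : ℝ} (hG : HasDerivAt G (g x) x)
    (hg : HasDerivAt g (g' x) x) (hg' : HasDerivAt g' g'' x) :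
    HasDerivAt (fun y ↦ 2 * G y * g' y - g y ^ 2) (2 * G x * g'') x :=
  (((hG.const_mul 2).fun_mul hg').fun_sub (hg.fun_pow 2)).congr_deriv (by norm_num)

theorem necessary_g''0_eq_zero (g : ℝ → ℝ) (hg : ContDiff ℝ 2 g)
    (h0 : g 0 = 0) (h1 : deriv g 0 = 1)
    (G : ℝ → ℝ) (hG : ∀ x, G x = ∫ t in (0:ℝ)..x, g t)
    (hyp : ∃ ε > 0, ∀ x : ℝ, x ≠ 0 → |x| < ε →
      g x ^ 2 - 2 * G x * deriv g x > 0) :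
    iteratedDeriv 2 g 0 = 0 := by
  obtain ⟨ε, hε, hyp⟩ := hyp
  have hg1 : Differentiable ℝ g := hg.differentiable (by norm_num)
  have hg2 : Differentiable ℝ (deriv g) := hg.differentiable_deriv_two
  have hG' : G = fun x ↦ ∫ t in (0:ℝ)..x, g t := funext hG
  have hGd : ∀ x, HasDerivAt G (g x) x := fun x ↦
    hG' ▸ (hg1.continuous.integral_hasStrictDerivAt 0 x).hasDerivAt
  have hFd : ∀ x, HasDerivAt (fun y ↦ 2 * G y * deriv g y - g y ^ 2)
      (2 * G x * deriv (deriv g) x) x := fun x ↦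
    (hGd x).two_mul_mul_sub_sq (hg1 x).hasDerivAt (hg2 x).hasDerivAt
  have hG0 : G 0 = 0 := by rw [hG, intervalIntegral.integral_same]
  rw [iteratedDeriv_succ, iteratedDeriv_one]
  refine eq_zero_of_eventually_lt_of_deriv_eq_mul (φ := fun x ↦ 2 * G x) (hFd 0).continuousAt
    ?_ ?_ ((hg.deriv' (n := 1)).continuous_deriv_one.continuousAt)
    (Eventually.of_forall fun x ↦ (hFd x).deriv)
  · filter_upwards [self_mem_nhdsWithin, nhdsWithin_le_nhds (Metric.ball_mem_nhds 0 hε)]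
      with x hx0 hxε
    simp only [hG0, h0]
    linarith [hyp x hx0 (by simpa using hxε)]
  · filter_upwards [eventually_nhdsNE_integral_pos hg1.continuous h0 (h1 ▸ one_pos)] with x hx
    rw [hG]
    positivity
end

section
/- Let g(x) = x + (a₂/2)x² + (a₃/6)x³ + ... be an analytic odd-type expansion with g(0)=0, g'(0)=1, and suppose the function d/dx[G/g²] can be written near 0 as an analytic function f of G(x), i.e. d/dx[G(x)/g(x)²] = f(G(x)). Then necessarily a₃ = (5/3)a₂², where a₂ = g''(0) and a₃ = g'''(0). -/
/-!
Clearing denominators in `d/dx [G / g²] = f(G)` gives `g² - 2 G g' = f(G) g³` near `0`.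
Since `g` vanishes to first order at `0`, the right-hand side vanishes to third order and,
as `(f ∘ G)' = f'(G) g` also vanishes at `0`, its third and fourth derivatives at `0` are
`6 f(0)` and `36 a₂ f(0)`. The left-hand side has third and fourth derivatives `-2 a₂` and
`-2 a₂² - 6 a₃` by the Leibniz rule. Eliminating `f(0) = -a₂ / 3` gives `a₃ = 5 a₂² / 3`.
-/

open Filter Topology

theorem eventually_hasDerivAt_intervalIntegral {E : Type*} [NormedAddCommGroup E]
    [NormedSpace ℝ E] [CompleteSpace E] {g : ℝ → E} {a : ℝ}
    (hg : ∀ᶠ x in 𝓝 a, ContinuousAt g x) :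
    ∀ᶠ x in 𝓝 a, HasDerivAt (fun u => ∫ t in a..u, g t) (g x) x := by
  obtain ⟨ε, hε, hball⟩ := Metric.eventually_nhds_iff_ball.mp hg
  have hcont : ContinuousOn g (Metric.ball a ε) := fun y hy => (hball y hy).continuousWithinAt
  filter_upwards [Metric.ball_mem_nhds a hε] with x hx
  have hsub : Set.uIcc a x ⊆ Metric.ball a ε :=
    (convex_ball a ε).ordConnected.uIcc_subset (Metric.mem_ball_self hε) hx
  exact intervalIntegral.integral_hasDerivAt_right (hcont.mono hsub).intervalIntegrable
    (hcont.stronglyMeasurableAtFilter Metric.isOpen_ball x hx) (hball x hx)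

section Primitive

variable {𝕜 : Type*} [NontriviallyNormedField 𝕜] {F : Type*} [NormedAddCommGroup F]
  [NormedSpace 𝕜 F] {φ ψ : 𝕜 → F} {a : 𝕜}

theorem ContDiffAt.of_eventually_hasDerivAt {n : ℕ} (hφ : ∀ᶠ x in 𝓝 a, HasDerivAt φ (ψ x) x)
    (hψ : ContDiffAt 𝕜 n ψ a) : ContDiffAt 𝕜 (n + 1) φ a := by
  rw [contDiffAt_succ_iff_hasFDerivAt]
  exact ⟨fun x => ContinuousLinearMap.smulRight (1 : 𝕜 →L[𝕜] 𝕜) (ψ x),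
    hφ.exists_mem.imp fun _ ⟨hu, h⟩ => ⟨hu, fun x hx => (h x hx).hasFDerivAt⟩,
    (ContinuousLinearMap.smulRightL 𝕜 𝕜 F 1).contDiff.contDiffAt.comp a hψ⟩

theorem iteratedDeriv_succ_eq_of_eventually_hasDerivAt
    (hφ : ∀ᶠ x in 𝓝 a, HasDerivAt φ (ψ x) x) (n : ℕ) :
    iteratedDeriv (n + 1) φ a = iteratedDeriv n ψ a := by
  rw [iteratedDeriv_succ']
  exact EventuallyEq.iteratedDeriv_eq n (hφ.mono fun x hx => hx.deriv)

end Primitive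

section Jets

variable {𝕜 : Type*} [NontriviallyNormedField 𝕜]

theorem deriv_div_sq_of_hasDerivAt {G g : 𝕜 → 𝕜} {x g' : 𝕜} (hG : HasDerivAt G (g x) x)
    (hg : HasDerivAt g g' x) (hx : g x ≠ 0) :
    deriv (fun y => G y / g y ^ 2) x = (g x ^ 2 - 2 * G x * g') / g x ^ 3 := by
  rw [(hG.fun_div (hg.fun_pow 2) (pow_ne_zero 2 hx)).deriv]
  field_simp
  ring

theorem sq_sub_two_mul_mul_deriv_eventuallyEq {G g F : 𝕜 → 𝕜}
    (hG : ∀ᶠ x in 𝓝 0, HasDerivAt G (g x) x) (hg : ∀ᶠ x in 𝓝 0, DifferentiableAt 𝕜 g x)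
    (h0 : g 0 = 0) (h1 : deriv g 0 ≠ 0) (hG0 : G 0 = 0)
    (hF : ∀ᶠ x in 𝓝[≠] 0, deriv (fun y => G y / g y ^ 2) x = F x) :
    (fun x => g x ^ 2 - 2 * G x * deriv g x) =ᶠ[𝓝 0] fun x => F x * g x ^ 3 := by
  have hne : ∀ᶠ x in 𝓝[≠] 0, g x ≠ 0 := by
    simpa [h0] using hg.self_of_nhds.hasDerivAt.eventually_ne h1
  refine eventuallyEq_nhds_of_eventuallyEq_nhdsNE ?_ (by simp [h0, hG0])
  filter_upwards [hF, hne, nhdsWithin_le_nhds (hG.and hg)] with x hx hgx ⟨hGx, hgx'⟩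
  rwa [deriv_div_sq_of_hasDerivAt hGx hgx'.hasDerivAt hgx,
    div_eq_iff (pow_ne_zero 3 hgx)] at hx

theorem iteratedDeriv_fun_mul_of_le {φ ψ : 𝕜 → 𝕜} {a : 𝕜} {m n : ℕ}
    (hφ : ContDiffAt 𝕜 m φ a) (hψ : ContDiffAt 𝕜 m ψ a) (hn : n ≤ m) :
    iteratedDeriv n (fun x => φ x * ψ x) a =
      ∑ i ∈ Finset.range (n + 1), n.choose i * iteratedDeriv i φ a * iteratedDeriv (n - i) ψ a :=
  iteratedDeriv_fun_mul (hφ.of_le (by exact_mod_cast hn)) (hψ.of_le (by exact_mod_cast hn))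

theorem iteratedDeriv_sq_sub_two_mul_mul_deriv {g G : 𝕜 → 𝕜}
    (hg : ContDiffAt 𝕜 5 g 0) (hG : ∀ᶠ x in 𝓝 0, HasDerivAt G (g x) x) (hG0 : G 0 = 0)
    (h0 : g 0 = 0) (h1 : deriv g 0 = 1) :
    iteratedDeriv 3 (fun x => g x ^ 2 - 2 * G x * deriv g x) 0 = -2 * iteratedDeriv 2 g 0 ∧
    iteratedDeriv 4 (fun x => g x ^ 2 - 2 * G x * deriv g x) 0 =
      -2 * iteratedDeriv 2 g 0 ^ 2 - 6 * iteratedDeriv 3 g 0 := by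
  have hG5 : ContDiffAt 𝕜 5 G 0 :=
    ContDiffAt.of_eventually_hasDerivAt (n := 4) hG (hg.of_le (by norm_num))
  have hg' : ContDiffAt 𝕜 4 (deriv g) 0 := hg.derivWithin (by norm_num)
  have leibniz (n : ℕ) (hn : n ≤ 4) :
      iteratedDeriv n (fun x => g x ^ 2 - 2 * G x * deriv g x) 0 =
        ∑ i ∈ Finset.range (n + 1), n.choose i * (iteratedDeriv i g 0 * iteratedDeriv (n - i) g 0
          - 2 * (iteratedDeriv i G 0 * iteratedDeriv (n - i + 1) g 0)) := by
    have hn' : (n : WithTop ℕ∞) ≤ 4 := by exact_mod_cast hn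
    have hgn : ContDiffAt 𝕜 n g 0 := hg.of_le (hn'.trans (by norm_num))
    have hGn : ContDiffAt 𝕜 n G 0 := hG5.of_le (hn'.trans (by norm_num))
    have hg'n : ContDiffAt 𝕜 n (deriv g) 0 := hg'.of_le hn'
    simp_rw [pow_two, mul_assoc]
    rw [iteratedDeriv_fun_sub, iteratedDeriv_const_mul_field, iteratedDeriv_fun_mul,
      iteratedDeriv_fun_mul, Finset.mul_sum, ← Finset.sum_sub_distrib]
    · simp only [← iteratedDeriv_succ']
      congr 1 with i
      ring
    all_goals fun_prop
  have hG1 : iteratedDeriv 1 G 0 = 0 := by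
    rw [iteratedDeriv_succ_eq_of_eventually_hasDerivAt hG 0, iteratedDeriv_zero, h0]
  have hG2 : iteratedDeriv 2 G 0 = 1 := by
    rw [iteratedDeriv_succ_eq_of_eventually_hasDerivAt hG 1, iteratedDeriv_one, h1]
  have hG3 : iteratedDeriv 3 G 0 = iteratedDeriv 2 g 0 :=
    iteratedDeriv_succ_eq_of_eventually_hasDerivAt hG 2
  have hG4 : iteratedDeriv 4 G 0 = iteratedDeriv 3 g 0 :=
    iteratedDeriv_succ_eq_of_eventually_hasDerivAt hG 3
  constructor
  · rw [leibniz 3 (by norm_num)]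
    simp [Finset.sum_range_succ, hG0, hG1, hG2, hG3, h0, h1]
    ring
  · rw [leibniz 4 (by norm_num)]
    simp [Finset.sum_range_succ, hG0, hG1, hG2, hG3, hG4, h0, h1, Nat.choose]
    ring

theorem iteratedDeriv_mul_cube {F g : 𝕜 → 𝕜} (hF : ContDiffAt 𝕜 4 F 0)
    (hg : ContDiffAt 𝕜 4 g 0) (h0 : g 0 = 0) (h1 : deriv g 0 = 1) :
    iteratedDeriv 3 (fun x => F x * g x ^ 3) 0 = 6 * F 0 ∧
    iteratedDeriv 4 (fun x => F x * g x ^ 3) 0 =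
      24 * deriv F 0 + 36 * iteratedDeriv 2 g 0 * F 0 := by
  have hsq {n : ℕ} (hn : n ≤ 4) := iteratedDeriv_fun_mul_of_le hg hg hn
  have hcube {n : ℕ} (hn : n ≤ 4) := iteratedDeriv_fun_mul_of_le hg (hg.mul hg) hn
  have hM {n : ℕ} (hn : n ≤ 4) := iteratedDeriv_fun_mul_of_le hF (hg.mul (hg.mul hg)) hn
  have s1 : iteratedDeriv 1 (fun x => g x * g x) 0 = 0 := by
    simp [hsq (n := 1) (by norm_num), Finset.sum_range_succ, h0]
  have s2 : iteratedDeriv 2 (fun x => g x * g x) 0 = 2 := by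
    simp [hsq (n := 2) (by norm_num), Finset.sum_range_succ, h0, h1]
  have s3 : iteratedDeriv 3 (fun x => g x * g x) 0 = 6 * iteratedDeriv 2 g 0 := by
    simp [hsq (n := 3) (by norm_num), Finset.sum_range_succ, h0, h1]
    ring
  have c1 : iteratedDeriv 1 (fun x => g x * (g x * g x)) 0 = 0 := by
    simp [hcube (n := 1) (by norm_num), Finset.sum_range_succ, h0]
  have c2 : iteratedDeriv 2 (fun x => g x * (g x * g x)) 0 = 0 := by
    simp [hcube (n := 2) (by norm_num), Finset.sum_range_succ, h0, s1]
  have c3 : iteratedDeriv 3 (fun x => g x * (g x * g x)) 0 = 6 := by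
    simp [hcube (n := 3) (by norm_num), Finset.sum_range_succ, h0, h1, s1, s2]
    norm_num
  have c4 : iteratedDeriv 4 (fun x => g x * (g x * g x)) 0 = 36 * iteratedDeriv 2 g 0 := by
    simp [hcube (n := 4) (by norm_num), Finset.sum_range_succ, h0, h1, s1, s2, s3, Nat.choose]
    ring
  simp_rw [pow_three]
  constructor
  · simp [hM (n := 3) (by norm_num), Finset.sum_range_succ, h0, c1, c2, c3]
    ring
  · simp [hM (n := 4) (by norm_num), Finset.sum_range_succ, h0, c1, c2, c3, c4, Nat.choose]
    ring

end Jets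

theorem coeff_a3_relation (g : ℝ → ℝ) (hg : AnalyticAt ℝ g 0)
    (h0 : g 0 = 0) (h1 : deriv g 0 = 1)
    (G : ℝ → ℝ) (hG : ∀ x, G x = ∫ t in (0:ℝ)..x, g t)
    (f : ℝ → ℝ) (hf : AnalyticAt ℝ f 0)
    (heq : ∀ᶠ x in nhdsWithin 0 {(0:ℝ)}ᶜ,
      deriv (fun y => G y / (g y) ^ 2) x = f (G x)) :
    iteratedDeriv 3 g 0 = (5 / 3) * (iteratedDeriv 2 g 0) ^ 2 := by
  have hGd : ∀ᶠ x in 𝓝 0, HasDerivAt G (g x) x := by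
    rw [funext hG]
    exact eventually_hasDerivAt_intervalIntegral
      (hg.eventually_analyticAt.mono fun _ h => h.continuousAt)
  have hG0 : G 0 = 0 := by simp [hG]
  have hf' : AnalyticAt ℝ f (G 0) := by rwa [hG0]
  have hNM : (fun x => g x ^ 2 - 2 * G x * deriv g x) =ᶠ[𝓝 0] fun x => f (G x) * g x ^ 3 :=
    sq_sub_two_mul_mul_deriv_eventuallyEq hGd
      (hg.eventually_analyticAt.mono fun _ h => h.differentiableAt) h0 (h1 ▸ one_ne_zero) hG0 heq
  have hFG : ContDiffAt ℝ 4 (fun x => f (G x)) 0 :=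
    hf'.contDiffAt.comp 0 (ContDiffAt.of_eventually_hasDerivAt (n := 3) hGd hg.contDiffAt)
  have hFG' : deriv (fun x => f (G x)) 0 = 0 := by
    simpa [Function.comp_def, h0] using
      (hf'.differentiableAt.hasDerivAt.comp 0 hGd.self_of_nhds).deriv
  obtain ⟨hN3, hN4⟩ := iteratedDeriv_sq_sub_two_mul_mul_deriv hg.contDiffAt hGd hG0 h0 h1
  obtain ⟨hM3, hM4⟩ := iteratedDeriv_mul_cube hFG hg.contDiffAt h0 h1
  have E3 := hNM.iteratedDeriv_eq 3
  have E4 := hNM.iteratedDeriv_eq 4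
  rw [hN3, hM3] at E3
  rw [hN4, hM4, hFG'] at E4
  linear_combination (-1 / 6 : ℝ) * E4 + iteratedDeriv 2 g 0 * E3
end

section
/- Let s = 0.647 and define g_s, G_s as above and H(s,x) = g_s(x)² + (1/(3s)) g_s(x)³ - 2 G_s(x) g_s'(x). Then H(s,·) changes sign near 0: there exist points x₋ < 0 < x₊ in (-0.05, 0.05) with H(s,x₋) · H(s,x₊) < 0. -/
set_option maxHeartbeats 1000000

open Set

theorem H_changes_sign
    (s : ℝ) (hs : s = 0.647)
    (g : ℝ → ℝ)
    (hg : ∀ x, g x =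
      ((1 / 2) * (x + s) * Real.sinh (2 * x) - (1 / 4) * Real.cosh (2 * x) + 1 / 4) / s)
    (G : ℝ → ℝ) (hG : ∀ x, G x = ∫ t in (0:ℝ)..x, g t)
    (H : ℝ → ℝ)
    (hH : ∀ x, H x = g x ^ 2 + (1 / (3 * s)) * g x ^ 3 - 2 * G x * deriv g x) :
    ∃ xm xp : ℝ, xm < 0 ∧ 0 < xp ∧ xm ∈ Ioo (-0.05 : ℝ) 0.05 ∧
      xp ∈ Ioo (-0.05 : ℝ) 0.05 ∧ H xm * H xp < 0 := by
  subst hs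
  have hdub : ∀ x : ℝ, HasDerivAt (fun y : ℝ => 2 * y) 2 x := by
    intro x; simpa using (hasDerivAt_id x).const_mul 2
  have hsinh : ∀ x : ℝ, HasDerivAt (fun y : ℝ => Real.sinh (2 * y)) (Real.cosh (2 * x) * 2) x :=
    fun x => (Real.hasDerivAt_sinh (2 * x)).comp x (hdub x)
  have hcosh : ∀ x : ℝ, HasDerivAt (fun y : ℝ => Real.cosh (2 * y)) (Real.sinh (2 * x) * 2) x :=
    fun x => (Real.hasDerivAt_cosh (2 * x)).comp x (hdub x)
  have hgfun : g = fun y : ℝ =>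
      ((1 / 2) * (y + 0.647) * Real.sinh (2 * y) - (1 / 4) * Real.cosh (2 * y) + 1 / 4) / 0.647 :=
    funext hg
  -- derivative of g
  have hgd : ∀ x : ℝ, HasDerivAt g ((x + 0.647) * Real.cosh (2 * x) / 0.647) x := by
    intro x
    rw [hgfun]
    have hx : HasDerivAt (fun y : ℝ => (1/2 : ℝ) * (y + 0.647)) (1/2) x := by
      simpa using ((hasDerivAt_id x).add_const (0.647 : ℝ)).const_mul (1/2 : ℝ)
    have h2 : HasDerivAt (fun y : ℝ =>
        ((1 / 2) * (y + 0.647) * Real.sinh (2 * y) - (1 / 4) * Real.cosh (2 * y) + 1 / 4) / 0.647)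
        (((1/2) * Real.sinh (2*x) + (1/2) * (x + 0.647) * (Real.cosh (2*x) * 2)
          - (1/4) * (Real.sinh (2*x) * 2)) / 0.647) x :=
      (((hx.mul (hsinh x)).sub ((hcosh x).const_mul (1/4 : ℝ))).add_const _).div_const _
    convert h2 using 1
    ring
  have hdg : ∀ x : ℝ, deriv g x = (x + 0.647) * Real.cosh (2 * x) / 0.647 :=
    fun x => (hgd x).deriv
  have hgc : Continuous g := by
    rw [hgfun]; fun_prop
  -- closed form of G
  have hFd : ∀ t : ℝ, HasDerivAt (fun t : ℝ =>
      ((t + 0.647) * Real.cosh (2 * t) - Real.sinh (2 * t) + t - 0.647) / (4 * 0.647)) (g t) t := by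
    intro t
    have hx : HasDerivAt (fun y : ℝ => y + (0.647 : ℝ)) 1 t := (hasDerivAt_id t).add_const _
    have h2 : HasDerivAt (fun t : ℝ =>
        ((t + 0.647) * Real.cosh (2 * t) - Real.sinh (2 * t) + t - 0.647) / (4 * 0.647))
        ((1 * Real.cosh (2*t) + (t + 0.647) * (Real.sinh (2*t) * 2)
          - Real.cosh (2*t) * 2 + 1) / (4 * 0.647)) t :=
      ((((hx.mul (hcosh t)).sub (hsinh t)).add (hasDerivAt_id t)).sub_const _).div_const _
    convert h2 using 1
    rw [hg t]; ring
  have hGF : ∀ x : ℝ, G x =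
      ((x + 0.647) * Real.cosh (2 * x) - Real.sinh (2 * x) + x - 0.647) / (4 * 0.647) := by
    intro x
    rw [hG x, intervalIntegral.integral_eq_sub_of_hasDerivAt (fun t _ => hFd t)
      (hgc.intervalIntegrable 0 x)]
    norm_num
  -- bounds on exp 0.09
  have e1 : (437669713183/400000000000 : ℝ) ≤ Real.exp 0.09 := by
    have h := Real.sum_le_exp_of_nonneg (by norm_num : (0:ℝ) ≤ 0.09) 6
    simp [Finset.sum_range_succ] at h
    norm_num [Nat.factorial] at h
    linarith
  have e2 : Real.exp 0.09 ≤ (175067885410981/160000000000000 : ℝ) := by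
    have h := Real.exp_bound' (by norm_num : (0:ℝ) ≤ 0.09) (by norm_num : (0.09:ℝ) ≤ 1)
      (n := 6) (by norm_num)
    simp [Finset.sum_range_succ] at h
    norm_num [Nat.factorial] at h
    linarith
  have epos : (0:ℝ) < Real.exp 0.09 := Real.exp_pos _
  have ei1 : (Real.exp 0.09)⁻¹ ≤ (437669713183/400000000000 : ℝ)⁻¹ :=
    inv_anti₀ (by norm_num) e1
  have ei2 : (175067885410981/160000000000000 : ℝ)⁻¹ ≤ (Real.exp 0.09)⁻¹ :=
    inv_anti₀ epos e2
  have hcosh09 : Real.cosh 0.09 = (Real.exp 0.09 + (Real.exp 0.09)⁻¹) / 2 := by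
    rw [Real.cosh_eq, Real.exp_neg]
  have hsinh09 : Real.sinh 0.09 = (Real.exp 0.09 - (Real.exp 0.09)⁻¹) / 2 := by
    rw [Real.sinh_eq, Real.exp_neg]
  have hc1 : (1.004052734 : ℝ) ≤ Real.cosh 0.09 := by
    rw [hcosh09]
    have : (1.004052734 : ℝ) ≤ (437669713183/400000000000
        + (175067885410981/160000000000000 : ℝ)⁻¹) / 2 := by norm_num
    linarith
  have hc2 : Real.cosh 0.09 ≤ (1.004052736 : ℝ) := by
    rw [hcosh09]
    have : ((175067885410981/160000000000000 : ℝ)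
        + (437669713183/400000000000 : ℝ)⁻¹) / 2 ≤ 1.004052736 := by norm_num
    linarith
  have hh1 : (0.090121548 : ℝ) ≤ Real.sinh 0.09 := by
    rw [hsinh09]
    have : (0.090121548 : ℝ) ≤ (437669713183/400000000000
        - (437669713183/400000000000 : ℝ)⁻¹) / 2 := by norm_num
    linarith
  have hh2 : Real.sinh 0.09 ≤ (0.090121550 : ℝ) := by
    rw [hsinh09]
    have : ((175067885410981/160000000000000 : ℝ)
        - (175067885410981/160000000000000 : ℝ)⁻¹) / 2 ≤ 0.090121550 := by norm_num
    linarith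
  have h2p : (2 : ℝ) * 0.045 = 0.09 := by norm_num
  have h2m : (2 : ℝ) * (-0.045) = -0.09 := by norm_num
  -- H at 0.045 is negative
  have keyp : ∀ cc sh : ℝ, (1.004052734 : ℝ) ≤ cc → cc ≤ 1.004052736 →
      (0.090121548 : ℝ) ≤ sh → sh ≤ 0.090121550 →
      (((1 / 2) * ((0.045:ℝ) + 0.647) * sh - (1 / 4) * cc + 1 / 4) / 0.647) ^ 2
        + (1 / (3 * 0.647)) * ((((1 / 2) * ((0.045:ℝ) + 0.647) * sh - (1 / 4) * cc + 1 / 4) / 0.647)) ^ 3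
        - 2 * ((((0.045:ℝ) + 0.647) * cc - sh + 0.045 - 0.647) / (4 * 0.647))
            * (((0.045:ℝ) + 0.647) * cc / 0.647) < 0 := by
    intro cc sh hc1 hc2 hh1 hh2
    set gv : ℝ := ((1 / 2) * ((0.045:ℝ) + 0.647) * sh - (1 / 4) * cc + 1 / 4) / 0.647 with hgv
    set Gv : ℝ := (((0.045:ℝ) + 0.647) * cc - sh + 0.045 - 0.647) / (4 * 0.647) with hGv
    set pv : ℝ := ((0.045:ℝ) + 0.647) * cc / 0.647 with hpv
    have hg0 : (0 : ℝ) ≤ gv := by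
      rw [hgv, le_div_iff₀ (by norm_num)]; linarith
    have hg2 : gv ≤ 0.046628861 := by
      rw [hgv, div_le_iff₀ (by norm_num)]; linarith
    have hG1 : (0.0010366854 : ℝ) ≤ Gv := by
      rw [hGv, le_div_iff₀ (by norm_num)]; linarith
    have hp1 : (1.0738863862 : ℝ) ≤ pv := by
      rw [hpv, le_div_iff₀ (by norm_num)]; linarith
    have hsq : gv ^ 2 ≤ (0.046628861 : ℝ) ^ 2 := pow_le_pow_left₀ hg0 hg2 2
    have hcube : gv ^ 3 ≤ (0.046628861 : ℝ) ^ 3 := pow_le_pow_left₀ hg0 hg2 3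
    have hprod : (0.0010366854 : ℝ) * 1.0738863862 ≤ Gv * pv :=
      mul_le_mul hG1 hp1 (by norm_num) (by linarith)
    have hq : (1 : ℝ) / (3 * 0.647) = 1000 / 1941 := by norm_num
    rw [hq]
    linarith [hsq, hcube, hprod]
  -- H at -0.045 is positive
  have keym : ∀ cc sh : ℝ, (1.004052734 : ℝ) ≤ cc → cc ≤ 1.004052736 →
      (0.090121548 : ℝ) ≤ sh → sh ≤ 0.090121550 →
      0 < (((1 / 2) * ((-0.045:ℝ) + 0.647) * -sh - (1 / 4) * cc + 1 / 4) / 0.647) ^ 2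
        + (1 / (3 * 0.647)) * ((((1 / 2) * ((-0.045:ℝ) + 0.647) * -sh - (1 / 4) * cc + 1 / 4) / 0.647)) ^ 3
        - 2 * ((((-0.045:ℝ) + 0.647) * cc - -sh + -0.045 - 0.647) / (4 * 0.647))
            * (((-0.045:ℝ) + 0.647) * cc / 0.647) := by
    intro cc sh hc1 hc2 hh1 hh2
    set gv : ℝ := ((1 / 2) * ((-0.045:ℝ) + 0.647) * -sh - (1 / 4) * cc + 1 / 4) / 0.647 with hgv
    set Gv : ℝ := (((-0.045:ℝ) + 0.647) * cc - -sh + -0.045 - 0.647) / (4 * 0.647) with hGv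
    set pv : ℝ := ((-0.045:ℝ) + 0.647) * cc / 0.647 with hpv
    have hg1 : (-0.043492691 : ℝ) ≤ gv := by
      rw [hgv, le_div_iff₀ (by norm_num)]; linarith
    have hg2 : gv ≤ (-0.043492688 : ℝ) := by
      rw [hgv, div_le_iff₀ (by norm_num)]; linarith
    have hG0 : (0 : ℝ) ≤ Gv := by
      rw [hGv, le_div_iff₀ (by norm_num)]; linarith
    have hG2 : Gv ≤ (0.0009896821 : ℝ) := by
      rw [hGv, div_le_iff₀ (by norm_num)]; linarith
    have hp0 : (0 : ℝ) ≤ pv := by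
      rw [hpv, le_div_iff₀ (by norm_num)]; linarith
    have hp2 : pv ≤ (0.9342190836 : ℝ) := by
      rw [hpv, div_le_iff₀ (by norm_num)]; linarith
    have hsq : (0.043492688 : ℝ) ^ 2 ≤ gv ^ 2 := by
      have h := pow_le_pow_left₀ (by norm_num : (0:ℝ) ≤ 0.043492688)
        (by linarith : (0.043492688 : ℝ) ≤ -gv) 2
      ring_nf at h ⊢; linarith
    have hcube : (-0.043492691 : ℝ) ^ 3 ≤ gv ^ 3 := by
      have h := pow_le_pow_left₀ (by linarith : (0:ℝ) ≤ -gv)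
        (by linarith : -gv ≤ (0.043492691 : ℝ)) 3
      ring_nf at h ⊢; linarith
    have hprod : Gv * pv ≤ (0.0009896821 : ℝ) * 0.9342190836 :=
      mul_le_mul hG2 hp2 hp0 (by norm_num)
    have hq : (1 : ℝ) / (3 * 0.647) = 1000 / 1941 := by norm_num
    rw [hq]
    linarith [hsq, hcube, hprod]
  refine ⟨-0.045, 0.045, by norm_num, by norm_num, mem_Ioo.2 ⟨by norm_num, by norm_num⟩,
    mem_Ioo.2 ⟨by norm_num, by norm_num⟩, ?_⟩
  have hxp : H 0.045 < 0 := by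
    rw [hH, hg, hGF, hdg, h2p]
    exact keyp _ _ hc1 hc2 hh1 hh2
  have hxm : 0 < H (-0.045) := by
    rw [hH, hg, hGF, hdg, h2m, Real.cosh_neg, Real.sinh_neg]
    exact keym _ _ hc1 hc2 hh1 hh2
  exact mul_neg_of_pos_of_neg hxm hxp
end
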